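/- Fix M ∈ ℤ and nonvanishing functions F_{t,a,n} for t,a,n ∈ ℤ with F_{t,a,m} ≡ 1 for all m ≤ M, and fix p, c, c̄ with c·c̄ = p. Define r_{t,a,n} = F_{t+1,a-1,n+1}/F_{t,a,n} and operators M = e^{∂_t} - c(r_{t,a,n}/r_{t,a+1,n-1}) e^{∂_a - ∂_n}, M̄ = -c̄ e^{-∂_a} + (r_{t,a,n}/r_{t-1,a,n-1}) e^{-∂_t - ∂_n} acting on functions f_{t,a,n}. Then [M, M̄] = 0 if and only if for all t,a,n: F_{t+1,a,n}F_{t-1,a,n-1} - p F_{t,a-1,n}F_{t,a+1,n-1} - (1-p)F_{t,a,n}F_{t,a,n-1} = 0. -/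

import Mathlib

noncomputable section

/-- `r_{t,a,n} = F_{t+1,a-1,n+1}/F_{t,a,n}`. -/
def rCoeff (F : ℤ → ℤ → ℤ → ℝ) (t a n : ℤ) : ℝ :=
  F (t + 1) (a - 1) (n + 1) / F t a n

/-- `M = e^{∂_t} - c (r_{t,a,n}/r_{t,a+1,n-1}) e^{∂_a - ∂_n}`. -/
def Mop (F : ℤ → ℤ → ℤ → ℝ) (c : ℝ) (f : ℤ → ℤ → ℤ → ℝ) : ℤ → ℤ → ℤ → ℝ :=
  fun t a n =>
    f (t + 1) a n
      - c * (rCoeff F t a n / rCoeff F t (a + 1) (n - 1)) * f t (a + 1) (n - 1)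

/-- `M̄ = -c̄ e^{-∂_a} + (r_{t,a,n}/r_{t-1,a,n-1}) e^{-∂_t - ∂_n}`. -/
def Mbar (F : ℤ → ℤ → ℤ → ℝ) (cbar : ℝ) (f : ℤ → ℤ → ℤ → ℝ) : ℤ → ℤ → ℤ → ℝ :=
  fun t a n =>
    -cbar * f t (a - 1) n
      + (rCoeff F t a n / rCoeff F (t - 1) a (n - 1)) * f (t - 1) a (n - 1)

/- ## Auxiliary machinery -/

def Acoef (F : ℤ → ℤ → ℤ → ℝ) (t a n : ℤ) : ℝ :=
  rCoeff F t a n / rCoeff F t (a + 1) (n - 1)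

def Bcoef (F : ℤ → ℤ → ℤ → ℝ) (t a n : ℤ) : ℝ :=
  rCoeff F t a n / rCoeff F (t - 1) a (n - 1)

def Eexp (F : ℤ → ℤ → ℤ → ℝ) (p : ℝ) (t a n : ℤ) : ℝ :=
  F (t + 1) a n * F (t - 1) a (n - 1) - p * F t (a - 1) n * F t (a + 1) (n - 1)
    - (1 - p) * F t a n * F t a (n - 1)

def Dexp (F : ℤ → ℤ → ℤ → ℝ) (p : ℝ) (t a n : ℤ) : ℝ :=
  Eexp F p t a n / (F t a n * F t a (n - 1))

lemma key_delta_raw (p x1 x2 x3 x4 x5 x6 x7 x8 x9 x10 : ℝ)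
    (h1 : x1 ≠ 0) (h2 : x2 ≠ 0) (h3 : x3 ≠ 0) (h4 : x4 ≠ 0) (h5 : x5 ≠ 0)
    (h6 : x6 ≠ 0) (h7 : x7 ≠ 0) (h8 : x8 ≠ 0) (h9 : x9 ≠ 0) (h10 : x10 ≠ 0) :
    (x1 / x2) / (x3 / x4) + p * ((x5 / x6) / (x2 / x7)) - (x5 / x6) / (x8 / x9)
        - p * ((x10 / x8) / (x3 / x4))
      = (x5 * x4 / (x2 * x8))
        * ((x1 * x8 - p * x10 * x2 - (1 - p) * x5 * x3) / (x5 * x3)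
            - (x2 * x9 - p * x8 * x7 - (1 - p) * x6 * x4) / (x6 * x4)) := by
  field_simp
  ring

lemma ident2_raw (x2 x4 x5 x6 x7 x8 x9 y1 : ℝ)
    (h2 : x2 ≠ 0) (h4 : x4 ≠ 0) (h5 : x5 ≠ 0) (h6 : x6 ≠ 0) (h7 : x7 ≠ 0)
    (h8 : x8 ≠ 0) (h9 : x9 ≠ 0) (hy : y1 ≠ 0) :
    ((x5 / x6) / (x2 / x7)) * ((x2 / x7) / (x4 / y1))
      = ((x5 / x6) / (x8 / x9)) * ((x8 / x9) / (x4 / y1)) := by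
  field_simp

lemma key_delta (F : ℤ → ℤ → ℤ → ℝ) (p : ℝ) (hne : ∀ t a n, F t a n ≠ 0) (t a n : ℤ) :
    Bcoef F (t + 1) a n + p * Acoef F t a n - Bcoef F t a n - p * Acoef F t (a - 1) n
      = (F (t + 1) (a - 1) (n + 1) * F t a (n - 1) / (F (t + 1) a n * F t (a - 1) n))
        * (Dexp F p (t + 1) (a - 1) (n + 1) - Dexp F p t a n) := by
  simp only [Acoef, Bcoef, Dexp, Eexp, rCoeff, Int.add_sub_cancel, Int.sub_add_cancel]
  exact key_delta_raw p _ _ _ _ _ _ _ _ _ _ (hne _ _ _) (hne _ _ _) (hne _ _ _)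
    (hne _ _ _) (hne _ _ _) (hne _ _ _) (hne _ _ _) (hne _ _ _) (hne _ _ _) (hne _ _ _)

lemma ident2 (F : ℤ → ℤ → ℤ → ℝ) (hne : ∀ t a n, F t a n ≠ 0) (t a n : ℤ) :
    Acoef F t a n * Bcoef F t (a + 1) (n - 1)
      = Bcoef F t a n * Acoef F (t - 1) a (n - 1) := by
  simp only [Acoef, Bcoef, rCoeff, Int.add_sub_cancel, Int.sub_add_cancel]
  exact ident2_raw _ _ _ _ _ _ _ _ (hne _ _ _) (hne _ _ _) (hne _ _ _) (hne _ _ _)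
    (hne _ _ _) (hne _ _ _) (hne _ _ _) (hne _ _ _)

lemma comm_formula (F : ℤ → ℤ → ℤ → ℝ) (c cbar : ℝ) (f : ℤ → ℤ → ℤ → ℝ) (t a n : ℤ) :
    Mop F c (Mbar F cbar f) t a n - Mbar F cbar (Mop F c f) t a n
      = (Bcoef F (t + 1) a n + (c * cbar) * Acoef F t a n - Bcoef F t a n
            - (c * cbar) * Acoef F t (a - 1) n) * f t a (n - 1)
        - c * (Acoef F t a n * Bcoef F t (a + 1) (n - 1)
            - Bcoef F t a n * Acoef F (t - 1) a (n - 1)) * f (t - 1) (a + 1) (n - 1 - 1) := by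
  simp only [Mop, Mbar, Acoef, Bcoef, Int.add_sub_cancel, Int.sub_add_cancel]
  ring

/-- Zero-curvature condition for the Parallel TASEP equation. -/
theorem parallel_tasep_zero_curvature (F : ℤ → ℤ → ℤ → ℝ) (M₀ : ℤ) (p c cbar : ℝ)
    (hpc : c * cbar = p)
    (hne : ∀ t a n, F t a n ≠ 0)
    (hbd : ∀ m ≤ M₀, ∀ t a : ℤ, F t a m = 1) :
    (∀ f : ℤ → ℤ → ℤ → ℝ, ∀ t a n : ℤ,
        Mop F c (Mbar F cbar f) t a n = Mbar F cbar (Mop F c f) t a n)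
    ↔ (∀ t a n : ℤ,
        F (t + 1) a n * F (t - 1) a (n - 1)
          - p * F t (a - 1) n * F t (a + 1) (n - 1)
          - (1 - p) * F t a n * F t a (n - 1) = 0) := by
  have hW : ∀ t a n : ℤ,
      F (t + 1) (a - 1) (n + 1) * F t a (n - 1) / (F (t + 1) a n * F t (a - 1) n) ≠ 0 :=
    fun t a n => div_ne_zero (mul_ne_zero (hne _ _ _) (hne _ _ _))
      (mul_ne_zero (hne _ _ _) (hne _ _ _))
  constructor
  · intro h
    -- Step 1: extract Δ = 0 using a delta function
    have hΔ : ∀ t a n : ℤ,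
        Bcoef F (t + 1) a n + p * Acoef F t a n - Bcoef F t a n
          - p * Acoef F t (a - 1) n = 0 := by
      intro t a n
      set f : ℤ → ℤ → ℤ → ℝ :=
        fun t' a' n' => if t' = t ∧ a' = a ∧ n' = n - 1 then 1 else 0 with hf
      have h0 := h f t a n
      have hcf := comm_formula F c cbar f t a n
      rw [h0, sub_self] at hcf
      have hf1 : f t a (n - 1) = 1 := by simp [hf]
      have hf2 : f (t - 1) (a + 1) (n - 1 - 1) = 0 := by
        simp only [hf]
        rw [if_neg]
        rintro ⟨ht, -, -⟩
        omega
      rw [hf1, hf2, mul_one, mul_zero, sub_zero, hpc] at hcf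
      linarith [hcf]
    -- Step 2: Δ = 0 gives the D recursion
    have hstep : ∀ t a n : ℤ, Dexp F p (t + 1) (a - 1) (n + 1) = Dexp F p t a n := by
      intro t a n
      have := key_delta F p hne t a n
      rw [hΔ t a n] at this
      have := (mul_eq_zero.mp this.symm).resolve_left (hW t a n)
      linarith [this]
    -- Step 3: base case
    have hbase : ∀ t a n : ℤ, n ≤ M₀ → Dexp F p t a n = 0 := by
      intro t a n hn
      have hE : Eexp F p t a n = 0 := by
        simp only [Eexp, hbd n hn, hbd (n - 1) (by omega)]
        ring
      rw [Dexp, hE, zero_div]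
    -- Step 4: induction
    have hDzero : ∀ t a n : ℤ, Dexp F p t a n = 0 := by
      have key : ∀ k : ℕ, ∀ t a n : ℤ, n ≤ M₀ + k → Dexp F p t a n = 0 := by
        intro k
        induction k with
        | zero => intro t a n hn; exact hbase t a n (by omega)
        | succ k ih =>
          intro t a n hn
          by_cases hn' : n ≤ M₀ + k
          · exact ih t a n hn'
          · have hs := hstep (t - 1) (a + 1) (n - 1)
            rw [show t - 1 + 1 = t from by ring, show a + 1 - 1 = a from by ring,
              show n - 1 + 1 = n from by ring] at hs
            rw [hs]
            exact ih _ _ _ (by omega)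
      intro t a n
      exact key (n - M₀).toNat t a n (by omega)
    -- Step 5: conclude E = 0
    intro t a n
    have := hDzero t a n
    rw [Dexp, div_eq_zero_iff] at this
    rcases this with hE | hden
    · exact hE
    · exact absurd hden (mul_ne_zero (hne _ _ _) (hne _ _ _))
  · intro hE f t a n
    have hEexp : ∀ t a n : ℤ, Eexp F p t a n = 0 := fun t a n => hE t a n
    have hD : ∀ t a n : ℤ, Dexp F p t a n = 0 := by
      intro t a n; rw [Dexp, hEexp, zero_div]
    have hΔ := key_delta F p hne t a n
    rw [hD, hD, sub_self, mul_zero] at hΔ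
    have hcf := comm_formula F c cbar f t a n
    rw [hpc, hΔ, ident2 F hne t a n] at hcf
    simp only [sub_self, zero_mul, mul_zero, sub_zero] at hcf
    linarith [hcf]

end
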